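/- arXiv:1503.04639 — 5 statements merged into one kernel-verified Lean document; each statement's English description precedes it below -/
import Mathlib

section
/- Let A be a finite dimensional algebra over an algebraically closed field K and let W be a wide subcategory of mod(A). If W is a module in W and X ⊆ W is a submodule that belongs to T_W := filt(gen(W)), then X belongs to W. -/
open CategoryTheory

section Defs

variable (K : Type) [Field K] (A : Type) [Ring A] [Algebra K A]

/-- An `A`-module is in `mod(A)` if it is finite dimensional over `K`
(via restriction of scalars along `K → A`). -/
def modCls : Set (ModuleCat A) :=
  {M | @FiniteDimensional K (RestrictScalars K A M) _ _ (RestrictScalars.module K A M)}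

variable {A}

/-- A class of modules is replete (closed under isomorphisms). -/
def IsoClosed (C : Set (ModuleCat A)) : Prop :=
  ∀ ⦃M N : ModuleCat A⦄, (M ≅ N) → M ∈ C → N ∈ C

/-- Closed under quotients. -/
def QuotClosed (C : Set (ModuleCat A)) : Prop :=
  ∀ ⦃M N : ModuleCat A⦄ (f : M ⟶ N), Function.Surjective f → M ∈ C → N ∈ C

/-- Closed under extensions. -/
def ExtClosed (C : Set (ModuleCat A)) : Prop :=
  ∀ ⦃M E N : ModuleCat A⦄ (f : M ⟶ E) (g : E ⟶ N),
    Function.Injective f → Function.Surjective g → Function.Exact f g →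
    M ∈ C → N ∈ C → E ∈ C

/-- Closed under kernels. -/
def KerClosed (C : Set (ModuleCat A)) : Prop :=
  ∀ ⦃M N : ModuleCat A⦄ (f : M ⟶ N), M ∈ C → N ∈ C →
    ModuleCat.of A ↥(LinearMap.ker f.hom) ∈ C

/-- Closed under cokernels. -/
def CokerClosed (C : Set (ModuleCat A)) : Prop :=
  ∀ ⦃M N : ModuleCat A⦄ (f : M ⟶ N), M ∈ C → N ∈ C →
    ModuleCat.of A (N ⧸ LinearMap.range f.hom) ∈ C

variable (A)

/-- A wide subcategory of `mod(A)`: a replete class of finite dimensional modules closed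
under kernels, cokernels and extensions. -/
def IsWide (C : Set (ModuleCat A)) : Prop :=
  C ⊆ modCls K A ∧ IsoClosed C ∧ KerClosed C ∧ CokerClosed C ∧ ExtClosed C

/-- A torsion class in `mod(A)`: a replete class of finite dimensional modules closed
under quotients and extensions. -/
def IsTorsionClass (C : Set (ModuleCat A)) : Prop :=
  C ⊆ modCls K A ∧ IsoClosed C ∧ QuotClosed C ∧ ExtClosed C

variable {A}

/-- `gen C`: all quotients of finite direct sums of objects of `C`. -/
def gen (C : Set (ModuleCat A)) : Set (ModuleCat A) :=
  {X | ∃ (n : ℕ) (M : Fin n → ModuleCat A) (_ : ∀ i, M i ∈ C)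
      (f : ModuleCat.of A (∀ i, M i) ⟶ X), Function.Surjective f}

/-- Modules admitting a `C`-filtration `0 = F 0 ⊆ F 1 ⊆ ⋯ ⊆ F n = X` of length exactly `n`,
with all subquotients `F (i+1) / F i` in `C`. -/
def filtLen (C : Set (ModuleCat A)) (n : ℕ) : Set (ModuleCat A) :=
  {X | ∃ F : Fin (n + 1) → Submodule A X,
      Monotone F ∧ F 0 = ⊥ ∧ F (Fin.last n) = ⊤ ∧
      ∀ i : Fin n, ModuleCat.of A
        (↥(F i.succ) ⧸ Submodule.comap (F i.succ).subtype (F i.castSucc)) ∈ C}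

/-- `filt C`: all modules admitting a finite filtration with subquotients in `C`. -/
def filt (C : Set (ModuleCat A)) : Set (ModuleCat A) :=
  {X | ∃ n, X ∈ filtLen C n}

/-- `C^{⋆n}`: modules with a `C`-filtration of length at most `n`. -/
def filtAtMost (C : Set (ModuleCat A)) (n : ℕ) : Set (ModuleCat A) :=
  {X | ∃ m ≤ n, X ∈ filtLen C m}

/-- `α(T)`: the modules `X ∈ T` such that for every map `g : Y → X` with `Y ∈ T`,
the kernel of `g` is again in `T`. -/
def alpha (T : Set (ModuleCat A)) : Set (ModuleCat A) :=
  {X | X ∈ T ∧ ∀ ⦃Y : ModuleCat A⦄ (g : Y ⟶ X), Y ∈ T →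
      ModuleCat.of A ↥(LinearMap.ker g.hom) ∈ T}

/-- `g : X ⟶ C₁` is a left `C`-approximation of `X`. -/
def IsLeftApprox (C : Set (ModuleCat A)) {X C₁ : ModuleCat A} (g : X ⟶ C₁) : Prop :=
  C₁ ∈ C ∧ ∀ ⦃C' : ModuleCat A⦄ (h : X ⟶ C'), C' ∈ C → ∃ k : C₁ ⟶ C', g ≫ k = h

/-- `g : C₂ ⟶ X` is a right `C`-approximation of `X`. -/
def IsRightApprox (C : Set (ModuleCat A)) {C₂ X : ModuleCat A} (g : C₂ ⟶ X) : Prop :=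
  C₂ ∈ C ∧ ∀ ⦃C' : ModuleCat A⦄ (h : C' ⟶ X), C' ∈ C → ∃ k : C' ⟶ C₂, k ≫ g = h

/-- A left approximation is (left) minimal if every endomorphism compatible with it is an
isomorphism. -/
def IsMinimalLeftApprox (C : Set (ModuleCat A)) {X C₁ : ModuleCat A} (g : X ⟶ C₁) : Prop :=
  IsLeftApprox C g ∧ ∀ h : C₁ ⟶ C₁, g ≫ h = g → IsIso h

variable (A)

/-- A class `C` is functorially finite in `mod(A)` if every finite dimensional module has
both a left and a right `C`-approximation. -/
def FunctFinite (C : Set (ModuleCat A)) : Prop :=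
  ∀ X ∈ modCls K A, (∃ (C₁ : ModuleCat A) (g : X ⟶ C₁), IsLeftApprox C g) ∧
    (∃ (C₂ : ModuleCat A) (g : C₂ ⟶ X), IsRightApprox C g)

variable {A}

/-- `add M`: direct summands of finite direct sums of copies of `M`. -/
def addOf (M : ModuleCat A) : Set (ModuleCat A) :=
  {X | ∃ (n : ℕ) (i : X ⟶ ModuleCat.of A (Fin n → M)) (r : ModuleCat.of A (Fin n → M) ⟶ X),
      i ≫ r = 𝟙 X}

/-- `gen M`: quotients of finite direct sums of copies of `M`. -/
def genOf (M : ModuleCat A) : Set (ModuleCat A) :=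
  {X | ∃ (n : ℕ) (f : ModuleCat.of A (Fin n → M) ⟶ X), Function.Surjective f}

/-- `P` is split projective in `C`: `P ∈ C` and every epimorphism onto `P` from an
object of `C` splits. -/
def SplitProjIn (C : Set (ModuleCat A)) (P : ModuleCat A) : Prop :=
  P ∈ C ∧ ∀ ⦃M : ModuleCat A⦄ (f : M ⟶ P), M ∈ C → Function.Surjective f →
    ∃ s : P ⟶ M, s ≫ f = 𝟙 P

end Defs


/-!
Every submodule of an object of `W` lying in `gen W` belongs to `W`: it is the image of a map
from a finite direct sum of objects of `W`, and `W` contains images. Now filter `X` by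
`0 = F₀ ⊆ ⋯ ⊆ Fₙ = X` with subquotients in `gen W` and argue by induction. If `Fᵢ ∈ W`, then
`W₀ / Fᵢ ∈ W` as a cokernel, and `Fᵢ₊₁ / Fᵢ` is a submodule of it lying in `gen W`, hence in `W`;
closure under extensions gives `Fᵢ₊₁ ∈ W`.
-/

universe v

section ClosureProperties

variable {A : Type} [Ring A] {W : Set (ModuleCat.{v} A)}

lemma IsoClosed.mem_of_linearEquiv (hiso : IsoClosed W) {M N : Type v} [AddCommGroup M]
    [Module A M] [AddCommGroup N] [Module A N] (hM : ModuleCat.of A M ∈ W) (e : M ≃ₗ[A] N) :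
    ModuleCat.of A N ∈ W :=
  hiso e.toModuleIso hM

lemma mem_gen_of_surjective {M N : Type v} [AddCommGroup M] [Module A M] [AddCommGroup N]
    [Module A N] (hM : ModuleCat.of A M ∈ gen W) (f : M →ₗ[A] N) (hf : Function.Surjective f) :
    ModuleCat.of A N ∈ gen W := by
  obtain ⟨n, Ms, hMs, g, hg⟩ := hM
  exact ⟨n, Ms, hMs, ModuleCat.ofHom (f ∘ₗ g.hom), hf.comp hg⟩

lemma KerClosed.mem_of_subsingleton (hker : KerClosed W) (hiso : IsoClosed W) {W₀ : ModuleCat A}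
    (hW₀ : W₀ ∈ W) (Z : Type v) [AddCommGroup Z] [Module A Z] [Subsingleton Z] :
    ModuleCat.of A Z ∈ W := by
  have hZero := hker (𝟙 W₀) hW₀ hW₀
  have : Subsingleton (LinearMap.ker (𝟙 W₀ : W₀ ⟶ W₀).hom) := by
    rw [ModuleCat.hom_id, LinearMap.ker_id]
    infer_instance
  exact hiso.mem_of_linearEquiv hZero (LinearEquiv.ofSubsingleton _ _)

lemma ExtClosed.prod_mem (hext : ExtClosed W) {M N : Type v} [AddCommGroup M] [Module A M]
    [AddCommGroup N] [Module A N] (hM : ModuleCat.of A M ∈ W) (hN : ModuleCat.of A N ∈ W) :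
    ModuleCat.of A (M × N) ∈ W :=
  hext (ModuleCat.ofHom (LinearMap.inl A M N)) (ModuleCat.ofHom (LinearMap.snd A M N))
    LinearMap.inl_injective LinearMap.snd_surjective Function.Exact.inl_snd hM hN

lemma ExtClosed.pi_mem (hext : ExtClosed W) (hiso : IsoClosed W) (hker : KerClosed W)
    {W₀ : ModuleCat A} (hW₀ : W₀ ∈ W) {n : ℕ} (Ms : Fin n → ModuleCat A) (hMs : ∀ i, Ms i ∈ W) :
    ModuleCat.of A (∀ i, Ms i) ∈ W := by
  induction n with
  | zero => exact hker.mem_of_subsingleton hiso hW₀ _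
  | succ n ih =>
    exact hiso.mem_of_linearEquiv
      (hext.prod_mem (hMs 0) (ih (fun i => Ms i.succ) fun i => hMs i.succ))
      (Fin.consLinearEquiv A fun i => Ms i)

lemma KerClosed.range_mem (hker : KerClosed W) (hiso : IsoClosed W)
    (hcoker : CokerClosed W) {M N : ModuleCat A} (f : M ⟶ N) (hM : M ∈ W) (hN : N ∈ W) :
    ModuleCat.of A (LinearMap.range f.hom) ∈ W := by
  have hker_mkQ := hker (ModuleCat.ofHom (LinearMap.range f.hom).mkQ) hN (hcoker f hM hN)
  exact hiso.mem_of_linearEquiv hker_mkQ (LinearEquiv.ofEq _ _ (Submodule.ker_mkQ _))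

lemma CokerClosed.quotient_mem (hcoker : CokerClosed W) (hiso : IsoClosed W) {N : ModuleCat A}
    (hN : N ∈ W) (p : Submodule A N) (hp : ModuleCat.of A p ∈ W) :
    ModuleCat.of A (N ⧸ p) ∈ W :=
  hiso.mem_of_linearEquiv (hcoker (ModuleCat.ofHom p.subtype) hp hN)
    (Submodule.quotEquivOfEq _ _ (Submodule.range_subtype p))

end ClosureProperties

namespace IsWide

variable {K A : Type} [Field K] [Ring A] [Algebra K A] {W : Set (ModuleCat.{v} A)}

lemma submodule_mem_of_mem_gen (hW : IsWide K A W) {N : ModuleCat A} (hN : N ∈ W) (p : Submodule A N) (hp : ModuleCat.of A p ∈ gen W) :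
    ModuleCat.of A p ∈ W := by
  obtain ⟨-, hiso, hker, hcoker, hext⟩ := hW
  obtain ⟨n, Ms, hMs, f, hf⟩ := hp
  have hRange := hker.range_mem hiso hcoker (ModuleCat.ofHom (p.subtype ∘ₗ f.hom))
    (hext.pi_mem hiso hker hN Ms hMs) hN
  have hp_eq : LinearMap.range (p.subtype ∘ₗ f.hom) = p := by
    rw [LinearMap.range_comp, LinearMap.range_eq_top.mpr hf, Submodule.map_top,
      Submodule.range_subtype]
  exact hiso.mem_of_linearEquiv hRange (LinearEquiv.ofEq _ _ hp_eq)

/-- `q / p` is the image of `q` in `N / ι p`, which lies in `W` as a cokernel. -/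
lemma mem_of_subquotient_mem_gen (hW : IsWide K A W) {N : ModuleCat A} (hN : N ∈ W)
    {X : Type v} [AddCommGroup X] [Module A X] {ι : X →ₗ[A] N} (hι : Function.Injective ι)
    {p q : Submodule A X} (hpq : p ≤ q) (hp : ModuleCat.of A p ∈ W)
    (hpq_gen : ModuleCat.of A (q ⧸ p.comap q.subtype) ∈ gen W) :
    ModuleCat.of A q ∈ W := by
  have ⟨_, hiso, _, hcoker, hext⟩ := hW
  have hιp : ModuleCat.of A (p.map ι) ∈ W :=
    hiso.mem_of_linearEquiv hp (p.equivMapOfInjective ι hι)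
  let φ : q →ₗ[A] N ⧸ p.map ι := (p.map ι).mkQ ∘ₗ ι ∘ₗ q.subtype
  have hker : LinearMap.ker φ = p.comap q.subtype := by
    rw [LinearMap.ker_comp, Submodule.ker_mkQ, Submodule.comap_comp,
      Submodule.comap_map_eq_of_injective hι]
  have hRange : ModuleCat.of A (LinearMap.range φ) ∈ W :=
    hW.submodule_mem_of_mem_gen (hcoker.quotient_mem hiso hN _ hιp) _
      (mem_gen_of_surjective hpq_gen
        ((Submodule.quotEquivOfEq _ _ hker.symm).trans φ.quotKerEquivRange).toLinearMap
        (LinearEquiv.surjective _))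
  have hexact : Function.Exact (Submodule.inclusion hpq) φ.rangeRestrict := by
    rw [LinearMap.exact_iff, LinearMap.ker_rangeRestrict, hker, Submodule.range_inclusion]
  exact hext (ModuleCat.ofHom (Submodule.inclusion hpq)) (ModuleCat.ofHom φ.rangeRestrict)
    (Submodule.inclusion_injective hpq) φ.surjective_rangeRestrict hexact hp hRange

end IsWide

theorem wide_closed_under_submodules_in_TW_general (K : Type) [Field K] (A : Type) [Ring A] [Algebra K A]
    (W : Set (ModuleCat A)) (hW : IsWide K A W)
    (W₀ : ModuleCat A) (hW₀ : W₀ ∈ W) (X : Submodule A W₀)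
    (hX : ModuleCat.of A ↥X ∈ filt (gen W)) :
    ModuleCat.of A ↥X ∈ W := by
  obtain ⟨n, F, hmono, h0, htop, hsub⟩ := hX
  have hF : ∀ i, ModuleCat.of A (F i) ∈ W := by
    intro i
    induction i using Fin.induction with
    | zero =>
      have : Subsingleton (F 0) := by rw [h0]; infer_instance
      exact hW.2.2.1.mem_of_subsingleton hW.2.1 hW₀ _
    | succ i ih =>
      exact hW.mem_of_subquotient_mem_gen hW₀ X.injective_subtype
        (hmono (Fin.castSucc_le_succ i)) ih (hsub i)
  have hTop := hF (Fin.last n)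
  rw [htop] at hTop
  exact hW.2.1.mem_of_linearEquiv hTop Submodule.topEquiv

theorem wide_closed_under_submodules_in_TW (K : Type) [Field K] [IsAlgClosed K] (A : Type) [Ring A] [Algebra K A]
    [FiniteDimensional K A]
    (W : Set (ModuleCat A)) (hW : IsWide K A W)
    (W₀ : ModuleCat A) (hW₀ : W₀ ∈ W) (X : Submodule A W₀)
    (hX : ModuleCat.of A ↥X ∈ filt (gen W)) :
    ModuleCat.of A ↥X ∈ W :=
  wide_closed_under_submodules_in_TW_general K A W hW W₀ hW₀ X hX
end

section
/- Let A be a finite dimensional algebra over an algebraically closed field K, let T be a functorially finite torsion class in mod(A), and let A →φ T₀ → T₁ → 0 be an exact sequence in which φ is a minimal left T-approximation of the regular module A. Then every epimorphism p': X' → T₀ in mod(A) with X' in add(T₀) splits; consequently every module in add(T₀) is split projective in T. -/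
open CategoryTheory

/-!
Since `φ` is a left approximation from a projective module, any epimorphism `f : M ⟶ T₀` with
`M ∈ T` receives a lift `k : T₀ ⟶ M` with `φ ≫ k ≫ f = φ`, and minimality makes `k ≫ f`
invertible, so `f` splits. Splitting of epimorphisms from `T` passes to finite products
(the kernel of a split epimorphism is a quotient of its source, hence stays in `T`) and to
retracts of modules in `T` (by adding the complement, using extension closure), hence to all
of `add T₀`.
-/

universe u

section SplitEpis

variable {A : Type} [Ring A]

def SplitsEpisFrom (T : Set (ModuleCat.{u} A)) (X : ModuleCat.{u} A) : Prop :=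
  ∀ ⦃M : ModuleCat A⦄ (f : M ⟶ X), M ∈ T → Function.Surjective f → ∃ s : X ⟶ M, s ≫ f = 𝟙 X

variable {T : Set (ModuleCat.{u} A)}

lemma splitsEpisFrom_of_isMinimalLeftApprox {P T₀ : ModuleCat.{u} A} [Projective P]
    {φ : P ⟶ T₀} (hφ : IsMinimalLeftApprox T φ) : SplitsEpisFrom T T₀ := by
  intro M f hM hf
  have : Epi f := (ModuleCat.epi_iff_surjective f).mpr hf
  obtain ⟨k, hk⟩ := hφ.1.2 (Projective.factorThru φ f) hM
  have : IsIso (k ≫ f) := hφ.2 _ (by rw [← Category.assoc, hk, Projective.factorThru_comp])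
  exact ⟨inv (k ≫ f) ≫ k, by simp⟩

lemma SplitsEpisFrom.of_iso {X Y : ModuleCat.{u} A} (hX : SplitsEpisFrom T X) (e : X ≅ Y) :
    SplitsEpisFrom T Y := by
  intro M f hM hf
  obtain ⟨s, hs⟩ := hX (f ≫ e.inv) hM (e.toLinearEquiv.symm.surjective.comp hf)
  exact ⟨e.inv ≫ s, by rw [← cancel_mono e.inv, Category.assoc, Category.assoc, hs]; simp⟩

lemma QuotClosed.ker_mem_of_comp_eq_id (hQ : QuotClosed T) {M X : ModuleCat.{u} A} (hM : M ∈ T)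
    (p : M ⟶ X) (s : X ⟶ M) (hs : s ≫ p = 𝟙 X) : ModuleCat.of A (LinearMap.ker p.hom) ∈ T := by
  have hps : ∀ x, p (s x) = x := fun x => ConcreteCategory.congr_hom hs x
  let q : M ⟶ ModuleCat.of A (LinearMap.ker p.hom) := ModuleCat.ofHom <|
    (LinearMap.id - s.hom ∘ₗ p.hom).codRestrict _ fun m => by simp [hps]
  refine hQ q (fun ⟨m, hm⟩ => ⟨m, Subtype.ext ?_⟩) hM
  simp [q, LinearMap.mem_ker.mp hm]

lemma QuotClosed.mem_of_retract (hQ : QuotClosed T) {X Y : ModuleCat.{u} A} (hY : Y ∈ T)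
    (e : Retract X Y) : X ∈ T :=
  hQ e.r (fun x => ⟨e.i x, ConcreteCategory.congr_hom e.retract x⟩) hY

lemma ExtClosed.prod_mem_s5 (hE : ExtClosed T) {X Y : ModuleCat.{u} A} (hX : X ∈ T) (hY : Y ∈ T) :
    ModuleCat.of A (X × Y) ∈ T :=
  hE (ModuleCat.ofHom (LinearMap.inl A X Y)) (ModuleCat.ofHom (LinearMap.snd A X Y))
    LinearMap.inl_injective Prod.snd_surjective Function.Exact.inl_snd hX hY

lemma SplitsEpisFrom.prod (hQ : QuotClosed T) {X Y : ModuleCat.{u} A} (hX : SplitsEpisFrom T X)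
    (hY : SplitsEpisFrom T Y) : SplitsEpisFrom T (ModuleCat.of A (X × Y)) := by
  intro M f hM hf
  let p₁ : M ⟶ X := f ≫ ModuleCat.ofHom (LinearMap.fst A X Y)
  obtain ⟨s₁, hs₁⟩ := hX p₁ hM (Prod.fst_surjective.comp hf)
  let N := LinearMap.ker p₁.hom
  let p₂ : ModuleCat.of A N ⟶ Y := ModuleCat.ofHom (LinearMap.snd A X Y ∘ₗ f.hom ∘ₗ N.subtype)
  have hp₂ : Function.Surjective p₂ := fun y => by
    obtain ⟨m, hm⟩ := hf (0, y)
    exact ⟨⟨m, by simp [N, p₁, hm]⟩, by simp [p₂, hm]⟩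
  obtain ⟨s₂, hs₂⟩ := hY p₂ (hQ.ker_mem_of_comp_eq_id hM p₁ s₁ hs₁) hp₂
  have h₁ : ∀ x, (f (s₁ x)).1 = x := fun x => ConcreteCategory.congr_hom hs₁ x
  have h₂ : ∀ y, (f (s₂ y)).2 = y := fun y => ConcreteCategory.congr_hom hs₂ y
  have h₂' : ∀ y, (f (s₂ y)).1 = 0 := fun y => (s₂ y).2
  -- `(x, y) ↦ s₁ x + s₂ (y - (f (s₁ x)).2)`
  refine ⟨ModuleCat.ofHom <| s₁.hom ∘ₗ LinearMap.fst A X Y + N.subtype ∘ₗ s₂.hom ∘ₗ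
    (LinearMap.snd A X Y - LinearMap.snd A X Y ∘ₗ f.hom ∘ₗ s₁.hom ∘ₗ LinearMap.fst A X Y), ?_⟩
  refine ModuleCat.hom_ext (LinearMap.ext fun ⟨x, y⟩ => Prod.ext ?_ ?_)
  · simp [h₁, h₂']
  · simp [h₂]

def finSuccPowIso (X : ModuleCat.{u} A) (n : ℕ) :
    ModuleCat.of A (X × (Fin n → X)) ≅ ModuleCat.of A (Fin (n + 1) → X) :=
  (Fin.consLinearEquiv A fun _ : Fin (n + 1) => (X : Type u)).toModuleIso

lemma pi_fin_mem (hiso : IsoClosed T) (hQ : QuotClosed T) (hE : ExtClosed T)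
    {X : ModuleCat.{u} A} (hX : X ∈ T) (n : ℕ) : ModuleCat.of A (Fin n → X) ∈ T := by
  induction n with
  | zero => exact hQ 0 (fun _ => ⟨0, Subsingleton.elim _ _⟩) hX
  | succ n ih => exact hiso (finSuccPowIso X n) (hE.prod_mem_s5 hX ih)

lemma SplitsEpisFrom.pi_fin (hQ : QuotClosed T) {X : ModuleCat.{u} A}
    (hX : SplitsEpisFrom T X) (n : ℕ) : SplitsEpisFrom T (ModuleCat.of A (Fin n → X)) := by
  induction n with
  | zero =>
    exact fun _ _ _ _ => ⟨0, ModuleCat.hom_ext (LinearMap.ext fun _ => Subsingleton.elim _ _)⟩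
  | succ n ih => exact (hX.prod hQ ih).of_iso (finSuccPowIso X n)

/-- Split `f : M ⟶ X` through the epimorphism `(m, y) ↦ i (f m) + y - i (r y)` from `M × Y`
onto `Y`, which is `f` on the summand `X` and the identity on the complement `ker r`. -/
lemma SplitsEpisFrom.of_retract (hE : ExtClosed T) {X Y : ModuleCat.{u} A} (hY : Y ∈ T)
    (hsplit : SplitsEpisFrom T Y) (e : Retract X Y) : SplitsEpisFrom T X := by
  intro M f hM hf
  have hri : ∀ x, e.r (e.i x) = x := fun x => ConcreteCategory.congr_hom e.retract x
  let g : ModuleCat.of A (M × Y) ⟶ Y := ModuleCat.ofHom <| e.i.hom ∘ₗ f.hom ∘ₗ LinearMap.fst A M Y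
    + (LinearMap.id - e.i.hom ∘ₗ e.r.hom) ∘ₗ LinearMap.snd A M Y
  have hg : Function.Surjective g := fun y => by
    obtain ⟨m, hm⟩ := hf (e.r y)
    exact ⟨(m, y - e.i (e.r y)), by simp [g, hm, hri]⟩
  obtain ⟨s, hs⟩ := hsplit g (hE.prod_mem_s5 hM hY) hg
  refine ⟨e.i ≫ s ≫ ModuleCat.ofHom (LinearMap.fst A M Y),
    ModuleCat.hom_ext (LinearMap.ext fun x => ?_)⟩
  have hgs : g (s (e.i x)) = e.i x := ConcreteCategory.congr_hom hs (e.i x)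
  simpa [g, hri] using congrArg e.r hgs

end SplitEpis

theorem split_projectives_from_minimal_approximation_general (K : Type) [Field K] (A : Type) [Ring A] [Algebra K A]
    (T : Set (ModuleCat A))
    (hT : IsTorsionClass K A T)
    (T₀ : ModuleCat A) (φ : ModuleCat.of A A ⟶ T₀)
    (hφ : IsMinimalLeftApprox T φ) :
    (∀ X' ∈ addOf T₀, ∀ p' : X' ⟶ T₀, Function.Surjective p' →
      ∃ s : T₀ ⟶ X', s ≫ p' = 𝟙 T₀) ∧
    ∀ P ∈ addOf T₀, SplitProjIn T P := by
  obtain ⟨-, hiso, hQ, hE⟩ := hT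
  have hT₀ : SplitsEpisFrom T T₀ := splitsEpisFrom_of_isMinimalLeftApprox hφ
  have hpow (n : ℕ) := pi_fin_mem hiso hQ hE hφ.1.1 n
  have hadd : ∀ P ∈ addOf T₀, SplitProjIn T P := by
    rintro P ⟨n, i, r, hir⟩
    let e : Retract P (ModuleCat.of A (Fin n → T₀)) := ⟨i, r, hir⟩
    exact ⟨hQ.mem_of_retract (hpow n) e, (hT₀.pi_fin hQ n).of_retract hE (hpow n) e⟩
  exact ⟨fun X' hX' p' hp' => hT₀ p' (hadd X' hX').1 hp', hadd⟩

theorem split_projectives_from_minimal_approximation (K : Type) [Field K] [IsAlgClosed K] (A : Type) [Ring A] [Algebra K A]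
    [FiniteDimensional K A]
    (T : Set (ModuleCat A))
    (hT : IsTorsionClass K A T) (hff : FunctFinite K A T)
    (T₀ T₁ : ModuleCat A) (φ : ModuleCat.of A A ⟶ T₀) (ψ : T₀ ⟶ T₁)
    (hφ : IsMinimalLeftApprox T φ) (hψ : Function.Surjective ψ)
    (hexact : Function.Exact φ ψ) :
    (∀ X' ∈ addOf T₀, ∀ p' : X' ⟶ T₀, Function.Surjective p' →
      ∃ s : T₀ ⟶ X', s ≫ p' = 𝟙 T₀) ∧
    ∀ P ∈ addOf T₀, SplitProjIn T P :=
  split_projectives_from_minimal_approximation_general K A T hT T₀ φ hφ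
end

section
/- Let A be a finite dimensional algebra over an algebraically closed field K, let T be a functorially finite torsion class in mod(A), and let A →φ T₀ → T₁ → 0 be an exact sequence in which φ is a minimal left T-approximation of A. Then α(T) = T ∩ T₁° ; that is, a module X ∈ T satisfies 'for every morphism g: Y → X with Y ∈ T, ker(g) ∈ T' if and only if Hom_A(T₁, X) = 0. -/
open CategoryTheory

/-!
Since `φ` is a left `T`-approximation of `A`, every `z` in a module `Z ∈ T` is the image of `φ 1`
under some `v : T₀ ⟶ Z`. If `X ∈ T` admits no nonzero map from `T₁ = coker φ` and `g : Y ⟶ X`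
with `Y ∈ T`, then for `z ∈ ker g` the map `v ≫ g` kills the image of `φ`, hence factors through
`T₁` and vanishes; so `ker g` is generated by `T₀`, i.e. a quotient of some `T₀ⁿ ∈ T`.
Conversely, if `X ∈ α(T)` and `f : T₁ ⟶ X`, then `ker (ψ ≫ f) ∈ T` contains the image of `φ`, so
`φ` factors through it, and minimality of `φ` forces `ker (ψ ≫ f) = T₀`, i.e. `f = 0`.
-/
section

variable {K : Type} [Field K] {A : Type} [Ring A] [Algebra K A]

theorem isNoetherian_of_mem_modCls {M : ModuleCat A} (hM : M ∈ modCls K A) :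
    IsNoetherian A M := by
  let _ : Module A (RestrictScalars K A M) := RestrictScalars.moduleOrig K A M
  have := RestrictScalars.isScalarTower K A M
  have hK : @IsNoetherian K (RestrictScalars K A M) _ _ (RestrictScalars.module K A M) :=
    (@IsNoetherian.iff_fg K (RestrictScalars K A M) _ _ (RestrictScalars.module K A M)).mpr hM
  have hA : IsNoetherian A (RestrictScalars K A M) := isNoetherian_of_tower K hK
  exact hA

end

section

variable {A : Type} [Ring A]

theorem pi_mem_of_mem {T : Set (ModuleCat A)} (hQ : QuotClosed T) (hE : ExtClosed T)
    {M : ModuleCat A} (hM : M ∈ T) (n : ℕ) : ModuleCat.of A (Fin n → M) ∈ T := by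
  induction n with
  | zero => exact hQ (0 : M ⟶ ModuleCat.of A (Fin 0 → M)) (fun _ => ⟨0, Subsingleton.elim _ _⟩) hM
  | succ n ih =>
    let e := Fin.consLinearEquiv A (fun _ : Fin (n + 1) => (M : Type _))
    let f : M ⟶ ModuleCat.of A (Fin (n + 1) → M) :=
      ModuleCat.ofHom (e.toLinearMap ∘ₗ LinearMap.inl A M (Fin n → M))
    let g : ModuleCat.of A (Fin (n + 1) → M) ⟶ ModuleCat.of A (Fin n → M) :=
      ModuleCat.ofHom (LinearMap.snd A M (Fin n → M) ∘ₗ e.symm.toLinearMap)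
    refine hE f g ?_ ?_ ?_ hM ih
    · exact e.injective.comp LinearMap.inl_injective
    · exact Prod.snd_surjective.comp e.symm.surjective
    · exact (LinearEquiv.conj_exact_iff_exact _ _ e).mpr Function.Exact.inl_snd

theorem genOf_subset {T : Set (ModuleCat A)} (hQ : QuotClosed T) (hE : ExtClosed T)
    {M : ModuleCat A} (hM : M ∈ T) : genOf M ⊆ T :=
  fun _ ⟨n, f, hf⟩ => hQ f hf (pi_mem_of_mem hQ hE hM n)

theorem mem_genOf_of_forall_mem_range {M Z : ModuleCat A} [Module.Finite A Z]
    (h : ∀ z : Z, ∃ v : M ⟶ Z, z ∈ Set.range v) : Z ∈ genOf M := by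
  obtain ⟨m, s, hs⟩ := Module.Finite.exists_fin (R := A) (M := Z)
  choose v hv using fun i => h (s i)
  let p := LinearMap.lsum A (fun _ : Fin m => (M : Type _)) ℕ (fun i => (v i).hom)
  refine ⟨m, ModuleCat.ofHom p, LinearMap.range_eq_top.mp (top_unique ?_)⟩
  rw [← hs, Submodule.span_le]
  rintro _ ⟨i, rfl⟩
  obtain ⟨x, hx⟩ := hv i
  exact ⟨Pi.single i x,
    (LinearMap.lsum_piSingle A (fun _ => M) ℕ (fun i => (v i).hom) i x).trans hx⟩

theorem IsLeftApprox.exists_hom_apply_eq_smul {C : Set (ModuleCat A)} {M : ModuleCat A}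
    {φ : ModuleCat.of A A ⟶ M} (hφ : IsLeftApprox C φ) {Z : ModuleCat A} (hZ : Z ∈ C)
    (z : Z) : ∃ v : M ⟶ Z, ∀ a : A, v (φ a) = a • z := by
  obtain ⟨v, hv⟩ := hφ.2 (ModuleCat.ofHom (LinearMap.toSpanSingleton A Z z)) hZ
  exact ⟨v, fun a => congr($hv a)⟩

theorem IsMinimalLeftApprox.eq_top_of_range_le {C : Set (ModuleCat A)} {X M : ModuleCat A}
    {φ : X ⟶ M} (hφ : IsMinimalLeftApprox C φ) {N : Submodule A M}
    (hN : ModuleCat.of A N ∈ C) (hφN : LinearMap.range φ.hom ≤ N) : N = ⊤ := by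
  obtain ⟨k, hk⟩ := hφ.1.2 (ModuleCat.ofHom (φ.hom.codRestrict N fun x => hφN ⟨x, rfl⟩)) hN
  let ι : ModuleCat.of A N ⟶ M := ModuleCat.ofHom N.subtype
  have : IsIso (k ≫ ι) := hφ.2 _ (by rw [← Category.assoc, hk]; rfl)
  rw [eq_top_iff]
  intro x _
  obtain ⟨y, rfl⟩ := (ConcreteCategory.bijective_of_isIso (k ≫ ι)).2 x
  exact (k y).2

theorem eq_zero_of_comp_eq_zero_of_exact {M N P X : ModuleCat A} {f : M ⟶ N} {g : N ⟶ P}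
    (hfg : Function.Exact f g) (hg : Function.Surjective g) (hP : ∀ w : P ⟶ X, w = 0)
    {u : N ⟶ X} (hu : f ≫ u = 0) : u = 0 := by
  have hfg' : Function.Exact f.hom g.hom := hfg
  have hle : LinearMap.range f.hom ≤ LinearMap.ker u.hom := by
    rintro _ ⟨x, rfl⟩
    exact congr($hu x)
  have hw := hP (ModuleCat.ofHom
    ((LinearMap.range f.hom).liftQ u.hom hle ∘ₗ (hfg'.linearEquivOfSurjective hg).symm.toLinearMap))
  ext x
  simpa using congr($hw (g x))

theorem ker_mem_genOf {T : Set (ModuleCat A)} {T₀ T₁ X Y : ModuleCat A}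
    {φ : ModuleCat.of A A ⟶ T₀} {ψ : T₀ ⟶ T₁} (hφ : IsLeftApprox T φ)
    (hψ : Function.Surjective ψ) (hexact : Function.Exact φ ψ) (hX : ∀ f : T₁ ⟶ X, f = 0)
    [IsNoetherian A Y] (hY : Y ∈ T) (g : Y ⟶ X) :
    ModuleCat.of A (LinearMap.ker g.hom) ∈ genOf T₀ := by
  apply mem_genOf_of_forall_mem_range
  rintro ⟨y, hy⟩
  obtain ⟨v, hv⟩ := hφ.exists_hom_apply_eq_smul hY y
  have hvg : v ≫ g = 0 := eq_zero_of_comp_eq_zero_of_exact hexact hψ hX <| by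
    ext
    simp [hv, LinearMap.mem_ker.mp hy]
  refine ⟨ModuleCat.ofHom (v.hom.codRestrict _ fun t => congr($hvg t)), φ 1, ?_⟩
  exact Subtype.ext ((hv 1).trans (one_smul A y))

end

theorem alpha_eq_inter_perp_general (K : Type) [Field K] (A : Type) [Ring A] [Algebra K A]
    (T : Set (ModuleCat A))
    (hT : IsTorsionClass K A T)
    (T₀ T₁ : ModuleCat A) (φ : ModuleCat.of A A ⟶ T₀) (ψ : T₀ ⟶ T₁)
    (hφ : IsMinimalLeftApprox T φ) (hψ : Function.Surjective ψ)
    (hexact : Function.Exact φ ψ) :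
    alpha T = T ∩ {X : ModuleCat A | ∀ f : T₁ ⟶ X, f = 0} := by
  obtain ⟨hTmod, -, hQuot, hExt⟩ := hT
  have hT₀ : T₀ ∈ T := hφ.1.1
  ext X
  constructor
  · rintro ⟨hXT, hXα⟩
    refine ⟨hXT, fun f => ?_⟩
    have hker : LinearMap.ker (ψ ≫ f).hom = ⊤ := by
      refine hφ.eq_top_of_range_le (hXα _ hT₀) ?_
      rintro _ ⟨a, rfl⟩
      simp [hexact.apply_apply_eq_zero]
    ext t
    obtain ⟨s, rfl⟩ := hψ t
    simpa using congr($(LinearMap.ker_eq_top.mp hker) s)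
  · rintro ⟨hXT, hX⟩
    refine ⟨hXT, fun Y g hY => genOf_subset hQuot hExt hT₀ ?_⟩
    have := isNoetherian_of_mem_modCls (hTmod hY)
    exact ker_mem_genOf hφ.1 hψ hexact hX hY g

theorem alpha_eq_inter_perp (K : Type) [Field K] [IsAlgClosed K] (A : Type) [Ring A] [Algebra K A]
    [FiniteDimensional K A]
    (T : Set (ModuleCat A))
    (hT : IsTorsionClass K A T) (hff : FunctFinite K A T)
    (T₀ T₁ : ModuleCat A) (φ : ModuleCat.of A A ⟶ T₀) (ψ : T₀ ⟶ T₁)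
    (hφ : IsMinimalLeftApprox T φ) (hψ : Function.Surjective ψ)
    (hexact : Function.Exact φ ψ) :
    alpha T = T ∩ {X : ModuleCat A | ∀ f : T₁ ⟶ X, f = 0} :=
  alpha_eq_inter_perp_general K A T hT T₀ T₁ φ ψ hφ hψ hexact
end

section
/- Let A be a finite dimensional algebra over an algebraically closed field K, let T ∈ mod(A) be a silting module with respect to a projective presentation σ, so that the functorially finite torsion class T := gen(T) equals D_σ, and let A →φ T₀ → T₁ → 0 be an exact sequence with T₀, T₁ ∈ add(T) in which φ is a minimal left T-approximation of A. Then there exists a projective presentation σ₁: Q₁ → Q₀ of T₁ (an exact sequence Q₁ → Q₀ → T₁ → 0 with Q₁, Q₀ finitely generated projective A-modules) such that D_{σ₁} = T. -/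
open CategoryTheory

/-- `D_σ`: the finite dimensional modules `X` such that `Hom(σ, X)` is surjective. -/
def Dclass (K : Type) [Field K] {A : Type} [Ring A] [Algebra K A]
    {P₁ P₀ : ModuleCat A} (σ : P₁ ⟶ P₀) : Set (ModuleCat A) :=
  {X | X ∈ modCls K A ∧ ∀ k : P₁ ⟶ X, ∃ h : P₀ ⟶ X, σ ≫ h = k}

/-!
Write `T₀` as a direct summand of `Tm ^ n`. Lifting the idempotent of `Tm ^ n` with image `T₀` to
the presentation `σ ^ n` and taking Fitting decompositions of the lifts splits off a direct summand
`σ' : S₁ → S₀` of `σ ^ n` presenting `T₀`; as it is a summand, `D_σ = D_{σ ^ n} ⊆ D_{σ'}`.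
If `l : A → S₀` lifts `φ`, then `[σ', l] : S₁ ⊕ A → S₀` presents `T₁ = coker φ`, and
`Hom([σ', l], X)` is surjective iff `Hom(σ', X)` and `Hom(φ, X)` are. For `X ∈ gen Tm` both hold,
the latter because `φ` is a left approximation. Conversely, surjectivity of `Hom(φ, X)` makes every
finitely generated `X` a quotient of a power of `T₀`, hence of `Tm`.
-/

section Pi

variable {R : Type*} [Ring R] {ι : Type*}

instance Module.Projective.pi [Fintype ι] {M : ι → Type*} [∀ i, AddCommGroup (M i)]
    [∀ i, Module R (M i)] [∀ i, Module.Projective R (M i)] : Module.Projective R (∀ i, M i) :=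
  .of_equiv DFinsupp.linearEquivFunOnFintype

theorem Function.Exact.piMap {M N P : ι → Type*} [∀ i, Zero (N i)] [∀ i, Zero (P i)]
    {f : ∀ i, M i → N i} {g : ∀ i, N i → P i} (h : ∀ i, Function.Exact (f i) (g i)) :
    Function.Exact (Pi.map f) (Pi.map g) := fun y => by
  simp [Set.range_piMap, funext_iff, h _ _]

end Pi

section HomSurjective

variable {R : Type*} [Ring R] {M N X : Type*} [AddCommGroup M] [Module R M]
  [AddCommGroup N] [Module R N] [AddCommGroup X] [Module R X]

def HomSurjective (σ : M →ₗ[R] N) (X : Type*) [AddCommGroup X] [Module R X] : Prop :=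
  ∀ k : M →ₗ[R] X, ∃ h : N →ₗ[R] X, h ∘ₗ σ = k

theorem LinearMap.exists_comp_eq_of_surjective_of_ker_le {p : M →ₗ[R] N}
    (hp : Function.Surjective p) {h : M →ₗ[R] X} (hk : LinearMap.ker p ≤ LinearMap.ker h) :
    ∃ g : N →ₗ[R] X, g ∘ₗ p = h :=
  ⟨(LinearMap.ker p).liftQ h hk ∘ₗ (p.quotKerEquivOfSurjective hp).symm.toLinearMap,
    by ext x; simp⟩

theorem HomSurjective.piMap {ι : Type*} [Fintype ι] [DecidableEq ι] {M N : ι → Type*}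
    [∀ i, AddCommGroup (M i)] [∀ i, Module R (M i)] [∀ i, AddCommGroup (N i)]
    [∀ i, Module R (N i)] {σ : ∀ i, M i →ₗ[R] N i} (h : ∀ i, HomSurjective (σ i) X) :
    HomSurjective (LinearMap.piMap σ) X := by
  intro k
  choose H hH using fun i => h i (k ∘ₗ LinearMap.single R M i)
  refine ⟨∑ i, H i ∘ₗ LinearMap.proj i, LinearMap.pi_ext' fun i => ?_⟩
  rw [← hH i]
  ext x
  simp only [LinearMap.comp_apply, LinearMap.sum_apply]
  rw [Finset.sum_eq_single i (fun c _ hc => by simp [Pi.single_eq_of_ne hc]) (by simp)]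
  simp

theorem HomSurjective.restrict {σ : M →ₗ[R] N} {S₁ : Submodule R M} {S₀ : Submodule R N}
    (hσ : ∀ x ∈ S₁, σ x ∈ S₀) {t : M →ₗ[R] S₁} (ht : t ∘ₗ S₁.subtype = LinearMap.id)
    (h : HomSurjective σ X) : HomSurjective (σ.restrict hσ) X := by
  intro k
  obtain ⟨g, hg⟩ := h (k ∘ₗ t)
  refine ⟨g ∘ₗ S₀.subtype, LinearMap.ext fun u => ?_⟩
  have htu : t u = u := LinearMap.congr_fun ht u
  simpa [htu] using LinearMap.congr_fun hg u

variable {Q₁ Q₀ F T : Type*} [AddCommGroup Q₁] [Module R Q₁] [AddCommGroup Q₀] [Module R Q₀]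
  [AddCommGroup F] [Module R F] [AddCommGroup T] [Module R T]
  {σ : Q₁ →ₗ[R] Q₀} {p : Q₀ →ₗ[R] N} {φ : F →ₗ[R] N} {l : F →ₗ[R] Q₀}

theorem Function.Exact.coprod_comp (hσp : Function.Exact σ p) (hl : p ∘ₗ l = φ)
    {ψ : N →ₗ[R] T} (hφψ : Function.Exact φ ψ) : Function.Exact (σ.coprod l) (ψ ∘ₗ p) := by
  have hl' (a : F) : p (l a) = φ a := LinearMap.congr_fun hl a
  intro y
  constructor
  · intro hy
    obtain ⟨a, ha⟩ := (hφψ (p y)).1 hy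
    obtain ⟨u, hu⟩ := (hσp (y - l a)).1 (by simp [← ha, hl'])
    exact ⟨(u, a), by simp [hu]⟩
  · rintro ⟨⟨u, a⟩, rfl⟩
    simp [hσp.apply_apply_eq_zero, hl', hφψ.apply_apply_eq_zero]

theorem homSurjective_coprod_iff (hp : Function.Surjective p) (hσp : Function.Exact σ p)
    (hl : p ∘ₗ l = φ) :
    HomSurjective (σ.coprod l) X ↔ HomSurjective σ X ∧ HomSurjective φ X := by
  constructor
  · intro h
    refine ⟨fun k => ?_, fun a => ?_⟩
    · obtain ⟨g, hg⟩ := h (k.coprod 0)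
      exact ⟨g, by simpa [LinearMap.comp_assoc] using congr($hg ∘ₗ LinearMap.inl R Q₁ F)⟩
    · obtain ⟨g, hg⟩ := h (LinearMap.coprod 0 a)
      have hσ : g ∘ₗ σ = 0 := by
        simpa [LinearMap.comp_assoc] using congr($hg ∘ₗ LinearMap.inl R Q₁ F)
      obtain ⟨g', rfl⟩ := LinearMap.exists_comp_eq_of_surjective_of_ker_le hp
        (h := g) fun x hx => by
          obtain ⟨u, rfl⟩ := (hσp x).1 hx
          exact LinearMap.congr_fun hσ u
      refine ⟨g', ?_⟩
      rw [← hl, ← LinearMap.comp_assoc]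
      simpa [LinearMap.comp_assoc] using congr($hg ∘ₗ LinearMap.inr R Q₁ F)
  · rintro ⟨hσ, hφ⟩ k
    obtain ⟨h₀, hh₀⟩ := hσ (k ∘ₗ LinearMap.inl R Q₁ F)
    -- correct `h₀` on the `F`-summand by a map factoring through `p`, which vanishes on `range σ`
    obtain ⟨g, hg⟩ := hφ (k ∘ₗ LinearMap.inr R Q₁ F - h₀ ∘ₗ l)
    refine ⟨h₀ + g ∘ₗ p, LinearMap.prod_ext ?_ ?_⟩
    · ext u
      simp [← hh₀, hσp.apply_apply_eq_zero]
    · ext a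
      have hg' : g (φ a) = k (0, a) - h₀ (l a) := LinearMap.congr_fun hg a
      have hl' : p (l a) = φ a := LinearMap.congr_fun hl a
      simp [hl', hg']

end HomSurjective

section Summand

variable {R : Type*} [Ring R] {P₁ P₀ M N : Type*} [AddCommGroup P₁] [Module R P₁]
  [AddCommGroup P₀] [Module R P₀] [AddCommGroup M] [Module R M] [AddCommGroup N] [Module R N]
  {σ : P₁ →ₗ[R] P₀} {π : P₀ →ₗ[R] M}

open LinearMap (ker range mem_ker mem_range_self)

theorem Function.Exact.exists_lift_endomorphism [Module.Projective R P₁] [Module.Projective R P₀]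
    (hσπ : Function.Exact σ π) (hπ : Function.Surjective π) (e : Module.End R M) :
    ∃ (g₀ : Module.End R P₀) (g₁ : Module.End R P₁), π ∘ₗ g₀ = e ∘ₗ π ∧ σ ∘ₗ g₁ = g₀ ∘ₗ σ := by
  obtain ⟨g₀, hg₀⟩ := Module.projective_lifting_property π (e ∘ₗ π) hπ
  have hmaps (x : P₁) : g₀ (σ x) ∈ range σ :=
    (hσπ _).1 (by
      rw [← LinearMap.comp_apply π g₀, hg₀, LinearMap.comp_apply, hσπ.apply_apply_eq_zero,
        map_zero])
  obtain ⟨g₁, hg₁⟩ := Module.projective_lifting_property σ.rangeRestrict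
    (LinearMap.codRestrict _ (g₀ ∘ₗ σ) hmaps) σ.surjective_rangeRestrict
  exact ⟨g₀, g₁, hg₀, LinearMap.ext fun x => congr_arg Subtype.val (LinearMap.congr_fun hg₁ x)⟩

theorem range_inf_range_le_map_range {f₁ : Module.End R P₁} {f₀ : Module.End R P₀}
    (hσ : σ ∘ₗ f₁ = f₀ ∘ₗ σ) (h₁ : Codisjoint (ker f₁) (range f₁))
    (h₀ : Disjoint (ker f₀) (range f₀)) :
    range σ ⊓ range f₀ ≤ (range f₁).map σ := by
  rintro _ ⟨⟨w, rfl⟩, hw⟩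
  obtain ⟨a, ha, b, ⟨c, rfl⟩, rfl⟩ :=
    Submodule.mem_sup.1 (h₁.eq_top ▸ Submodule.mem_top : w ∈ ker f₁ ⊔ range f₁)
  have hσb : σ (f₁ c) = f₀ (σ c) := LinearMap.congr_fun hσ c
  have hσa : σ a = 0 := by
    refine Submodule.disjoint_def.1 h₀ _ ?_ ?_
    · rw [mem_ker, ← LinearMap.comp_apply f₀, ← hσ, LinearMap.comp_apply, mem_ker.1 ha,
        map_zero]
    · simpa [hσb] using Submodule.sub_mem _ hw (mem_range_self f₀ (σ c))
  exact ⟨f₁ c, mem_range_self f₁ c, by simp [hσa]⟩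

variable {i : N →ₗ[R] M} {r : M →ₗ[R] N} {f₀ : Module.End R P₀}

theorem surjective_comp_range_subtype_of_comp_eq (hπ : Function.Surjective π)
    (hri : r ∘ₗ i = LinearMap.id) (hf₀ : π ∘ₗ f₀ = i ∘ₗ r ∘ₗ π) :
    Function.Surjective (r ∘ₗ π ∘ₗ (range f₀).subtype) := by
  intro t
  obtain ⟨y, hy⟩ := hπ (i t)
  refine ⟨⟨f₀ y, mem_range_self f₀ y⟩, ?_⟩
  simp [← LinearMap.comp_apply π f₀, hf₀, hy, ← LinearMap.comp_apply r i, hri]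

theorem eq_zero_of_mem_range_of_comp_eq (hri : r ∘ₗ i = LinearMap.id)
    (hf₀ : π ∘ₗ f₀ = i ∘ₗ r ∘ₗ π) {x : P₀} (hx : x ∈ range f₀) (h : r (π x) = 0) : π x = 0 := by
  obtain ⟨y, rfl⟩ := hx
  have hπx : π (f₀ y) = i (r (π y)) := LinearMap.congr_fun hf₀ y
  rw [hπx] at h ⊢
  rw [← LinearMap.comp_apply r i, hri, LinearMap.id_apply] at h
  rw [h, map_zero]

/-- The presentation of the summand is the restriction of `σ` to the Fitting components of lifts
of the idempotent `i ∘ r`. -/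
theorem exists_presentation_of_retract [IsNoetherianRing R] [IsArtinianRing R]
    [Module.Finite R P₁] [Module.Projective R P₁] [Module.Finite R P₀] [Module.Projective R P₀]
    (hσπ : Function.Exact σ π) (hπ : Function.Surjective π) (hri : r ∘ₗ i = LinearMap.id) :
    ∃ (S₁ : Submodule R P₁) (S₀ : Submodule R P₀) (σ' : S₁ →ₗ[R] S₀) (p : S₀ →ₗ[R] N),
      Module.Projective R S₁ ∧ Module.Projective R S₀ ∧ Function.Surjective p ∧
      Function.Exact σ' p ∧
      ∀ (X : Type*) [AddCommGroup X] [Module R X], HomSurjective σ X → HomSurjective σ' X := by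
  have he : IsIdempotentElem (i ∘ₗ r) := by
    change (i ∘ₗ r) ∘ₗ (i ∘ₗ r) = i ∘ₗ r
    rw [LinearMap.comp_assoc, ← LinearMap.comp_assoc r i r, hri, LinearMap.id_comp]
  obtain ⟨g₀, g₁, hg₀, hg₁⟩ := hσπ.exists_lift_endomorphism hπ (i ∘ₗ r)
  obtain ⟨m, ⟨h₁, h₀⟩, hm⟩ := ((g₁.eventually_isCompl_ker_pow_range_pow.and
    g₀.eventually_isCompl_ker_pow_range_pow).and (Filter.eventually_ne_atTop 0)).exists
  have hσm : σ ∘ₗ (g₁ ^ m) = (g₀ ^ m) ∘ₗ σ :=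
    (Module.End.commute_pow_left_of_commute hg₁.symm m).symm
  have hπm : π ∘ₗ (g₀ ^ m) = i ∘ₗ r ∘ₗ π := by
    rw [← Module.End.commute_pow_left_of_commute hg₀.symm m, he.pow_eq hm, LinearMap.comp_assoc]
  have hmaps : ∀ x ∈ range (g₁ ^ m), σ x ∈ range (g₀ ^ m) := by
    rintro _ ⟨c, rfl⟩
    exact ⟨σ c, (LinearMap.congr_fun hσm c).symm⟩
  refine ⟨_, _, σ.restrict hmaps, r ∘ₗ π ∘ₗ (range (g₀ ^ m)).subtype,
    .of_split _ _ (Submodule.projectionOnto_comp_subtype h₁.symm),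
    .of_split _ _ (Submodule.projectionOnto_comp_subtype h₀.symm),
    surjective_comp_range_subtype_of_comp_eq hπ hri hπm, fun x => ⟨fun hx => ?_, ?_⟩,
    fun X _ _ h => h.restrict hmaps (Submodule.projectionOnto_comp_subtype h₁.symm)⟩
  · obtain ⟨u, hu, hux⟩ := range_inf_range_le_map_range hσm h₁.codisjoint h₀.disjoint
      ⟨(hσπ x).1 (eq_zero_of_mem_range_of_comp_eq hri hπm x.2 hx), x.2⟩
    exact ⟨⟨u, hu⟩, Subtype.ext hux⟩
  · rintro ⟨u, rfl⟩
    simp [hσπ.apply_apply_eq_zero]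

end Summand

section ModuleCat

variable {K : Type} [Field K] {A : Type} [Ring A] [Algebra K A]

theorem mem_Dclass_iff {P₁ P₀ : ModuleCat A} (σ : P₁ ⟶ P₀) (X : ModuleCat A) :
    X ∈ Dclass K σ ↔ X ∈ modCls K A ∧ HomSurjective σ.hom X := by
  refine and_congr_right fun _ => ⟨fun h k => ?_, fun h k => ?_⟩
  · obtain ⟨g, hg⟩ := h (ModuleCat.ofHom k)
    exact ⟨g.hom, congr_arg ModuleCat.Hom.hom hg⟩
  · obtain ⟨g, hg⟩ := h k.hom
    exact ⟨ModuleCat.ofHom g, ModuleCat.hom_ext hg⟩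

theorem Module.Finite.of_mem_modCls {X : ModuleCat A} (hX : X ∈ modCls K A) :
    Module.Finite A X := by
  let := RestrictScalars.moduleOrig K A X
  have : Module.Finite K (RestrictScalars K A X) := hX
  exact Module.Finite.of_restrictScalars_finite K A (RestrictScalars K A X)

theorem IsLeftApprox.homSurjective {C : Set (ModuleCat A)} {Y C₁ X : ModuleCat A}
    {φ : Y ⟶ C₁} (hφ : IsLeftApprox C φ) (hX : X ∈ C) : HomSurjective φ.hom X := fun k => by
  obtain ⟨g, hg⟩ := hφ.2 (ModuleCat.ofHom k) hX
  exact ⟨g.hom, congr_arg ModuleCat.Hom.hom hg⟩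

theorem addOf_subset_genOf (M : ModuleCat A) : addOf M ⊆ genOf M := by
  rintro X ⟨n, i, r, hir⟩
  exact ⟨n, r, fun x => ⟨i x, by simpa using congr(($hir).hom x)⟩⟩

theorem mem_genOf_of_surjective {M N X : ModuleCat A} (hN : N ∈ genOf M) {s : ℕ}
    (f : (Fin s → N) →ₗ[A] X) (hf : Function.Surjective f) : X ∈ genOf M := by
  obtain ⟨n, g, hg⟩ := hN
  let e : (Fin (s * n) → M) ≃ₗ[A] (Fin s → Fin n → M) :=
    (LinearEquiv.funCongrLeft A M finProdFinEquiv).trans (LinearEquiv.curry A M (Fin s) (Fin n))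
  exact ⟨s * n, ModuleCat.ofHom (f ∘ₗ LinearMap.piMap (fun _ => g.hom) ∘ₗ e.toLinearMap),
    hf.comp ((Function.Surjective.piMap fun _ => hg).comp e.surjective)⟩

theorem mem_genOf_of_homSurjective {M N X : ModuleCat A} [Module.Finite A X] (hN : N ∈ genOf M)
    (φ : A →ₗ[A] N) (hφ : HomSurjective φ X) : X ∈ genOf M := by
  obtain ⟨s, f, hf⟩ := Module.Finite.exists_fin' A X
  obtain ⟨G, rfl⟩ := HomSurjective.piMap (fun _ : Fin s => hφ) f
  exact mem_genOf_of_surjective hN G (Function.Surjective.of_comp hf)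

end ModuleCat

theorem partial_silting_presentation_of_T1_general (K : Type) [Field K] (A : Type) [Ring A] [Algebra K A]
    [FiniteDimensional K A]
    (Tm : ModuleCat A)
    (P₁ P₀ : ModuleCat A)
    (hP₁f : Module.Finite A P₁) (hP₁p : Module.Projective A P₁)
    (hP₀f : Module.Finite A P₀) (hP₀p : Module.Projective A P₀)
    (σ : P₁ ⟶ P₀) (π : P₀ ⟶ Tm)
    (hπ : Function.Surjective π) (hexσ : Function.Exact σ π)
    (hsilting : Dclass K σ = genOf Tm)
    (T₀ T₁ : ModuleCat A) (hT₀ : T₀ ∈ addOf Tm)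
    (φ : ModuleCat.of A A ⟶ T₀) (ψ : T₀ ⟶ T₁)
    (hφ : IsMinimalLeftApprox (genOf Tm) φ) (hψ : Function.Surjective ψ)
    (hexact : Function.Exact φ ψ) :
    ∃ (Q₁ Q₀ : ModuleCat A) (σ₁ : Q₁ ⟶ Q₀) (π₁ : Q₀ ⟶ T₁),
      Module.Finite A Q₁ ∧ Module.Projective A Q₁ ∧
      Module.Finite A Q₀ ∧ Module.Projective A Q₀ ∧
      Function.Surjective π₁ ∧ Function.Exact σ₁ π₁ ∧
      Dclass K σ₁ = genOf Tm := by
  have := hP₁f; have := hP₁p; have := hP₀f; have := hP₀p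
  have : IsNoetherianRing A := isNoetherian_of_tower K inferInstance
  have : IsArtinianRing A := isArtinian_of_tower K inferInstance
  obtain ⟨n, i, r, hir⟩ := hT₀
  obtain ⟨S₁, S₀, σ', p, hS₁, hS₀, hp, hσ'p, hD⟩ :=
    exists_presentation_of_retract (σ := LinearMap.piMap fun _ : Fin n => σ.hom)
      (π := LinearMap.piMap fun _ : Fin n => π.hom)
      (by simpa only [LinearMap.coe_piMap] using Function.Exact.piMap fun _ => hexσ)
      (by simpa only [LinearMap.coe_piMap] using Function.Surjective.piMap fun _ => hπ)
      (by simpa using congr_arg ModuleCat.Hom.hom hir)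
  obtain ⟨l, hl⟩ := Module.projective_lifting_property p φ.hom hp
  refine ⟨.of A (S₁ × A), .of A S₀, ModuleCat.ofHom (σ'.coprod l), ModuleCat.ofHom (ψ.hom ∘ₗ p),
    inferInstance, inferInstance, inferInstance, hS₀, hψ.comp hp, hσ'p.coprod_comp hl hexact, ?_⟩
  ext X
  rw [mem_Dclass_iff, ModuleCat.hom_ofHom, homSurjective_coprod_iff hp hσ'p hl]
  constructor
  · rintro ⟨hX, -, hφX⟩
    have := Module.Finite.of_mem_modCls hX
    exact mem_genOf_of_homSurjective (addOf_subset_genOf Tm ⟨n, i, r, hir⟩) φ.hom hφX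
  · intro hX
    obtain ⟨hXfin, hσX⟩ := (mem_Dclass_iff σ X).1 (hsilting ▸ hX)
    exact ⟨hXfin, hD X (HomSurjective.piMap fun _ => hσX), hφ.1.homSurjective hX⟩

theorem partial_silting_presentation_of_T1 (K : Type) [Field K] [IsAlgClosed K] (A : Type) [Ring A] [Algebra K A]
    [FiniteDimensional K A]
    (Tm : ModuleCat A) (hTm : Tm ∈ modCls K A)
    (P₁ P₀ : ModuleCat A)
    (hP₁f : Module.Finite A P₁) (hP₁p : Module.Projective A P₁)
    (hP₀f : Module.Finite A P₀) (hP₀p : Module.Projective A P₀)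
    (σ : P₁ ⟶ P₀) (π : P₀ ⟶ Tm)
    (hπ : Function.Surjective π) (hexσ : Function.Exact σ π)
    (hsilting : Dclass K σ = genOf Tm)
    (T₀ T₁ : ModuleCat A) (hT₀ : T₀ ∈ addOf Tm) (hT₁ : T₁ ∈ addOf Tm)
    (φ : ModuleCat.of A A ⟶ T₀) (ψ : T₀ ⟶ T₁)
    (hφ : IsMinimalLeftApprox (genOf Tm) φ) (hψ : Function.Surjective ψ)
    (hexact : Function.Exact φ ψ) :
    ∃ (Q₁ Q₀ : ModuleCat A) (σ₁ : Q₁ ⟶ Q₀) (π₁ : Q₀ ⟶ T₁),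
      Module.Finite A Q₁ ∧ Module.Projective A Q₁ ∧
      Module.Finite A Q₀ ∧ Module.Projective A Q₀ ∧
      Function.Surjective π₁ ∧ Function.Exact σ₁ π₁ ∧
      Dclass K σ₁ = genOf Tm :=
  partial_silting_presentation_of_T1_general K A Tm P₁ P₀ hP₁f hP₁p hP₀f hP₀p σ π hπ hexσ hsilting
    T₀ T₁ hT₀ φ ψ hφ hψ hexact
end

section
/- Let A be a finite dimensional algebra over an algebraically closed field K and let T be a functorially finite torsion class in mod(A) with minimal left T-approximation sequence A →φ T₀ → T₁ → 0. Then for every nonzero module X ∈ T there is a nonzero homomorphism from some object of α(T) to X; equivalently, Hom_A(T₀/tr_{T₁}(T₀), X) ≠ 0, where tr_{T₁}(T₀) denotes the trace of T₁ in T₀ (the sum of the images of all homomorphisms T₁ → T₀). -/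
open CategoryTheory

/-!
Put `B = T₀ / tr_{T₁}(T₀)`. By minimality of `φ`, every epimorphism in `T` onto `T₀` splits,
so maps out of `T₀` lift along epimorphisms with kernel in `T`. Lifting `u ∘ ψ` for
`u : T₁ → B` along `T₀ → B` (whose kernel, the trace, is in `T`) and correcting the lift on
`φ 1` by a map into the trace shows `u ∘ ψ = 0`, so `Hom(T₁, B) = 0`.

Any `V ∈ T` with `Hom(T₁, V) = 0` lies in `α(T)`: for `g : Y → V` with `Y ∈ T`, each
`z ∈ ker g` is `v (φ 1)` for some `v : T₀ → Y`, and `g ∘ v` kills `φ 1`, so it factors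
through `ψ` and vanishes. Thus `ker g` is generated by images of `T₀`, finitely many by
finite dimensionality, and lies in `T`.

Finally, `1 + f ∘ g ∘ ψ` fixes `φ`, so it is invertible by minimality: every `g ∘ ψ` lies in
the Jacobson radical of `End(T₀)`. The radical is nilpotent, so some nonzero `w : T₀ → X` is
annihilated by it, hence kills the trace and factors through `B`.
-/

theorem Function.Exact.exists_comp_eq_of_comp_eq_zero {A : Type} [Ring A]
    {M N P V : ModuleCat A} {f : M ⟶ N} {g : N ⟶ P} (hfg : Function.Exact f g)
    (hg : Function.Surjective g) (u : N ⟶ V) (hu : f ≫ u = 0) : ∃ w : P ⟶ V, g ≫ w = u := by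
  have hle : LinearMap.range f.hom ≤ LinearMap.ker u.hom := by
    rintro _ ⟨x, rfl⟩
    exact congr($hu x)
  refine ⟨ModuleCat.ofHom ((LinearMap.range f.hom).liftQ u.hom hle ∘ₗ
    (hfg.linearEquivOfSurjective hg).symm.toLinearMap), ?_⟩
  ext x
  simp [Function.Exact.linearEquivOfSurjective_symm_apply]

theorem LinearMap.exists_ne_zero_comp_eq_zero_of_isNilpotent {A V X : Type*} [Ring A]
    [AddCommGroup V] [Module A V] [AddCommGroup X] [Module A X] {J : Ideal (Module.End A V)}
    (hJ : IsNilpotent J) {w₀ : V →ₗ[A] X} (hw₀ : w₀ ≠ 0) :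
    ∃ w : V →ₗ[A] X, w ≠ 0 ∧ ∀ x ∈ J, w ∘ₗ x = 0 := by
  obtain ⟨n, hn⟩ := hJ
  by_contra! h
  have key (j : ℕ) : ∃ y ∈ J ^ j, w₀ ∘ₗ y ≠ 0 := by
    induction j with
    | zero => exact ⟨1, Submodule.one_le.1 le_rfl, hw₀⟩
    | succ j ih =>
      obtain ⟨y, hy, hwy⟩ := ih
      obtain ⟨x, hx, hwyx⟩ := h _ hwy
      exact ⟨y * x, Submodule.pow_succ J ▸ Ideal.mul_mem_mul hy hx, hwyx⟩
  obtain ⟨y, hy, hwy⟩ := key n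
  rw [hn, Submodule.zero_eq_bot, Ideal.mem_bot] at hy
  exact hwy (by rw [hy, LinearMap.comp_zero])

namespace IsTorsionClass

variable {K : Type} [Field K] {A : Type} [Ring A] [Algebra K A] {T : Set (ModuleCat A)}

theorem mem_of_linearEquiv (hT : IsTorsionClass K A T) {M N : ModuleCat A} (e : M ≃ₗ[A] N)
    (hM : M ∈ T) : N ∈ T :=
  hT.2.1 e.toModuleIso hM

theorem range_mem (hT : IsTorsionClass K A T) {M N : ModuleCat A} (f : M ⟶ N) (hM : M ∈ T) :
    ModuleCat.of A (LinearMap.range f.hom) ∈ T :=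
  hT.2.2.1 (ModuleCat.ofHom f.hom.rangeRestrict) f.hom.surjective_rangeRestrict hM

theorem prod_mem (hT : IsTorsionClass K A T) {M N : ModuleCat A} (hM : M ∈ T) (hN : N ∈ T) :
    ModuleCat.of A (M × N) ∈ T :=
  hT.2.2.2 (ModuleCat.ofHom (LinearMap.inl A M N)) (ModuleCat.ofHom (LinearMap.snd A M N))
    LinearMap.inl_injective LinearMap.snd_surjective Function.Exact.inl_snd hM hN

theorem sup_mem (hT : IsTorsionClass K A T) {N : ModuleCat A} {P Q : Submodule A N}
    (hP : ModuleCat.of A P ∈ T) (hQ : ModuleCat.of A Q ∈ T) : ModuleCat.of A ↥(P ⊔ Q) ∈ T := by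
  have h := hT.range_mem (ModuleCat.ofHom (P.subtype.coprod Q.subtype)) (hT.prod_mem hP hQ)
  rwa [ModuleCat.hom_ofHom, LinearMap.range_coprod, Submodule.range_subtype,
    Submodule.range_subtype] at h

theorem bot_mem (hT : IsTorsionClass K A T) (hne : T.Nonempty) (N : ModuleCat A) :
    ModuleCat.of A (⊥ : Submodule A N) ∈ T := by
  obtain ⟨M, hM⟩ := hne
  exact hT.2.2.1 (0 : M ⟶ ModuleCat.of A (⊥ : Submodule A N))
    (fun y => ⟨0, Subsingleton.elim _ _⟩) hM

theorem sSup_mem (hT : IsTorsionClass K A T) (hne : T.Nonempty) {N : ModuleCat A}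
    [IsNoetherian A N] (S : Set (Submodule A N))
    (hS : ∀ P ∈ S, ModuleCat.of A P ∈ T) : ModuleCat.of A ↥(sSup S) ∈ T := by
  obtain ⟨t, htS, hSt⟩ := CompleteLattice.WellFoundedGT.isSupFiniteCompact _ S
  rw [hSt]
  exact Finset.sup_induction (p := fun P : Submodule A N => ModuleCat.of A P ∈ T)
    (hT.bot_mem hne N) (fun _ hP _ hQ => hT.sup_mem hP hQ) fun P hP => hS P (htS hP)

end IsTorsionClass

section FiniteDimensional

variable {K : Type} [Field K] {A : Type} [Ring A] [Algebra K A]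

theorem isArtinianRing_end_of_mem_modCls {M : ModuleCat A} (hM : M ∈ modCls K A) :
    IsArtinianRing (Module.End A M) := by
  let _ : Module K M := Module.compHom M (algebraMap K A)
  have : IsScalarTower K A M := IsScalarTower.of_compHom K A M
  have : FiniteDimensional K M := hM
  have : FiniteDimensional K (Module.End A M) :=
    Module.Finite.of_injective (LinearMap.restrictScalarsₗ K A M M K)
      (LinearMap.restrictScalars_injective K)
  exact IsArtinianRing.of_finite K _

end FiniteDimensional

def ModuleCat.trace {A : Type} [Ring A] (M N : ModuleCat A) : Submodule A N :=
  ⨆ g : M ⟶ N, LinearMap.range g.hom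

open ModuleCat

namespace IsTorsionClass

variable {K : Type} [Field K] {A : Type} [Ring A] [Algebra K A] {T : Set (ModuleCat A)}

theorem trace_mem (hT : IsTorsionClass K A T) {M N : ModuleCat A} (hM : M ∈ T)
    [IsNoetherian A N] : ModuleCat.of A (trace M N) ∈ T :=
  hT.sSup_mem ⟨M, hM⟩ (Set.range fun g : M ⟶ N => LinearMap.range g.hom) <| by
    rintro _ ⟨g, rfl⟩
    exact hT.range_mem g hM

theorem mem_of_forall_mem_range (hT : IsTorsionClass K A T) {M N : ModuleCat A} (hM : M ∈ T)
    [IsNoetherian A N] (h : ∀ y : N, ∃ g : M ⟶ N, y ∈ LinearMap.range g.hom) : N ∈ T := by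
  have htop : trace M N = ⊤ := eq_top_iff.2 fun y _ =>
    let ⟨g, hg⟩ := h y
    le_iSup (fun g : M ⟶ N => LinearMap.range g.hom) g hg
  exact hT.mem_of_linearEquiv ((LinearEquiv.ofEq _ _ htop).trans Submodule.topEquiv)
    (hT.trace_mem hM)

end IsTorsionClass

section MinimalApproximation

variable {K : Type} [Field K] {A : Type} [Ring A] [Algebra K A] {T : Set (ModuleCat A)}
  {T₀ T₁ : ModuleCat A} {φ : ModuleCat.of A A ⟶ T₀} {ψ : T₀ ⟶ T₁}

theorem IsLeftApprox.exists_hom_apply_eq (hφ : IsLeftApprox T φ) {V : ModuleCat A} (hV : V ∈ T)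
    (y : V) : ∃ k : T₀ ⟶ V, k (φ 1) = y := by
  obtain ⟨k, hk⟩ := hφ.2 (ModuleCat.ofHom (LinearMap.toSpanSingleton A V y)) hV
  exact ⟨k, by simpa using congr($hk 1)⟩

theorem IsMinimalLeftApprox.exists_section (hφ : IsMinimalLeftApprox T φ) {E : ModuleCat A}
    (hE : E ∈ T) (π : E ⟶ T₀) (hπ : Function.Surjective π) : ∃ s : T₀ ⟶ E, s ≫ π = 𝟙 T₀ := by
  obtain ⟨e, he⟩ := hπ (φ 1)
  obtain ⟨k, hk⟩ := hφ.1.exists_hom_apply_eq hE e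
  have : IsIso (k ≫ π) := hφ.2 _ <| ModuleCat.hom_ext <| LinearMap.ext_ring <| by
    simp [hk, he]
  exact ⟨inv (k ≫ π) ≫ k, by simp⟩

theorem IsMinimalLeftApprox.exists_lift (hT : IsTorsionClass K A T)
    (hφ : IsMinimalLeftApprox T φ) {M W : ModuleCat A} (π : M ⟶ W) (hπ : Function.Surjective π)
    (hker : ModuleCat.of A (LinearMap.ker π.hom) ∈ T) (u : T₀ ⟶ W) :
    ∃ v : T₀ ⟶ M, v ≫ π = u := by
  -- the pullback of `π` along `u`, an extension of `T₀` by `ker π`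
  let P : Submodule A (T₀ × M) :=
    LinearMap.ker (u.hom ∘ₗ LinearMap.fst A T₀ M - π.hom ∘ₗ LinearMap.snd A T₀ M)
  have mem_P (z : T₀ × M) : z ∈ P ↔ u z.1 = π z.2 := by
    simp [P, sub_eq_zero]
  let i : LinearMap.ker π.hom →ₗ[A] P :=
    LinearMap.codRestrict P (LinearMap.inr A T₀ M ∘ₗ (LinearMap.ker π.hom).subtype)
      fun m => (mem_P _).2 (by simp)
  let p : P →ₗ[A] T₀ := LinearMap.fst A T₀ M ∘ₗ P.subtype
  have hp : Function.Surjective p := fun x =>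
    let ⟨m, hm⟩ := hπ (u x)
    ⟨⟨(x, m), (mem_P _).2 hm.symm⟩, rfl⟩
  have hi : Function.Injective i := fun m m' h => Subtype.ext congr((($h : P) : T₀ × M).2)
  have hip : Function.Exact i p := by
    rintro ⟨⟨x, m⟩, hxm⟩
    constructor
    · rintro rfl
      refine ⟨⟨m, ?_⟩, rfl⟩
      simpa using ((mem_P _).1 hxm).symm
    · rintro ⟨m, hm⟩
      rw [← hm]
      rfl
  have hP : ModuleCat.of A P ∈ T :=
    hT.2.2.2 (ModuleCat.ofHom i) (ModuleCat.ofHom p) hi hp hip hker hφ.1.1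
  obtain ⟨s, hs⟩ := hφ.exists_section hP (ModuleCat.ofHom p) hp
  refine ⟨s ≫ ModuleCat.ofHom (LinearMap.snd A T₀ M ∘ₗ P.subtype), ?_⟩
  ext x
  have hsx := (mem_P _).1 (s x).2
  rw [show (s x : T₀ × M).1 = x from congr($hs x)] at hsx
  simpa using hsx.symm

theorem hom_quotient_trace_eq_zero (hT : IsTorsionClass K A T) (hφ : IsMinimalLeftApprox T φ)
    (hψ : Function.Surjective ψ) (hexact : Function.Exact φ ψ)
    (u : T₁ ⟶ ModuleCat.of A (T₀ ⧸ trace T₁ T₀)) : u = 0 := by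
  have := isNoetherian_of_mem_modCls (hT.1 hφ.1.1)
  have htr : ModuleCat.of A (trace T₁ T₀) ∈ T := hT.trace_mem (hT.2.2.1 ψ hψ hφ.1.1)
  let q : T₀ ⟶ ModuleCat.of A (T₀ ⧸ trace T₁ T₀) := ModuleCat.ofHom (trace T₁ T₀).mkQ
  obtain ⟨h, hh⟩ := hφ.exists_lift hT q (trace T₁ T₀).mkQ_surjective
    (by rwa [ModuleCat.hom_ofHom, Submodule.ker_mkQ]) (ψ ≫ u)
  have hφ1 : h (φ 1) ∈ trace T₁ T₀ :=
    (Submodule.Quotient.mk_eq_zero _).1 <| by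
      simpa [q, hexact.apply_apply_eq_zero] using congr($hh (φ 1))
  obtain ⟨k, hk⟩ := hφ.1.exists_hom_apply_eq htr ⟨h (φ 1), hφ1⟩
  obtain ⟨g, hg⟩ := hexact.exists_comp_eq_of_comp_eq_zero hψ
    (h - k ≫ ModuleCat.ofHom (trace T₁ T₀).subtype)
    (ModuleCat.hom_ext <| LinearMap.ext_ring <| by simp [hk])
  have hψu : ψ ≫ u = 0 := by
    rw [← hh]
    ext x
    have hx : h x = k x + g (ψ x) := by
      simpa [sub_eq_iff_eq_add'] using congr($hg x).symm
    change Submodule.Quotient.mk (h x) = 0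
    rw [Submodule.Quotient.mk_eq_zero, hx]
    exact add_mem (k x).2 (le_iSup (fun g : T₁ ⟶ T₀ => LinearMap.range g.hom) g ⟨ψ x, rfl⟩)
  have : Epi ψ := (ModuleCat.epi_iff_surjective ψ).2 hψ
  exact (cancel_epi ψ).1 (hψu.trans Limits.comp_zero.symm)

theorem mem_alpha_of_forall_hom_eq_zero (hT : IsTorsionClass K A T)
    (hφ : IsMinimalLeftApprox T φ) (hψ : Function.Surjective ψ) (hexact : Function.Exact φ ψ)
    {V : ModuleCat A} (hV : V ∈ T) (hV₁ : ∀ w : T₁ ⟶ V, w = 0) : V ∈ alpha T := by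
  refine ⟨hV, fun Y g hY => ?_⟩
  have := isNoetherian_of_mem_modCls (hT.1 hY)
  refine hT.mem_of_forall_mem_range hφ.1.1 fun z => ?_
  obtain ⟨v, hv⟩ := hφ.1.exists_hom_apply_eq hY z.1
  obtain ⟨w, hw⟩ := hexact.exists_comp_eq_of_comp_eq_zero hψ (v ≫ g)
    (ModuleCat.hom_ext <| LinearMap.ext_ring <| by simp [hv])
  have hvg : v ≫ g = 0 := by rw [← hw, hV₁ w, Limits.comp_zero]
  exact ⟨ModuleCat.ofHom (LinearMap.codRestrict _ v.hom fun x => congr($hvg x)), φ 1,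
    Subtype.ext hv⟩

theorem IsMinimalLeftApprox.comp_mem_jacobson (hφ : IsMinimalLeftApprox T φ)
    (hexact : Function.Exact φ ψ) (g : T₁ ⟶ T₀) :
    (ψ ≫ g).hom ∈ Ring.jacobson (Module.End A T₀) := by
  rw [← Ideal.jacobson_bot, Ideal.mem_jacobson_iff]
  intro y
  let e : T₀ ⟶ T₀ := ModuleCat.ofHom (y * (ψ ≫ g).hom + 1)
  have : IsIso e := hφ.2 e <| ModuleCat.hom_ext <| LinearMap.ext_ring <| by
    simp [e, hexact.apply_apply_eq_zero]
  refine ⟨(inv e).hom, ?_⟩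
  have hinv : (inv e).hom * (y * (ψ ≫ g).hom + 1) = 1 := congr(($(IsIso.hom_inv_id e)).hom)
  rw [Ideal.mem_bot, ← hinv]
  noncomm_ring

theorem exists_ne_zero_trace_le_ker (hT : IsTorsionClass K A T) (hφ : IsMinimalLeftApprox T φ)
    (hψ : Function.Surjective ψ) (hexact : Function.Exact φ ψ) {X : ModuleCat A} (hX : X ∈ T)
    [Nontrivial X] : ∃ w : T₀ ⟶ X, w ≠ 0 ∧ trace T₁ T₀ ≤ LinearMap.ker w.hom := by
  have := isArtinianRing_end_of_mem_modCls (hT.1 hφ.1.1)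
  obtain ⟨x, hx⟩ := exists_ne (0 : X)
  obtain ⟨k, hk⟩ := hφ.1.exists_hom_apply_eq hX x
  have hk0 : k.hom ≠ 0 := fun h => hx (by rw [← hk]; exact congr($h (φ 1)))
  obtain ⟨w, hw0, hw⟩ := LinearMap.exists_ne_zero_comp_eq_zero_of_isNilpotent
    IsArtinianRing.isNilpotent_jacobson_bot hk0
  refine ⟨ModuleCat.ofHom w, fun h => hw0 congr(($h).hom), iSup_le fun g => ?_⟩
  rintro _ ⟨y, rfl⟩
  obtain ⟨x, rfl⟩ := hψ y
  have hwg := hw _ (by rw [Ideal.jacobson_bot]; exact hφ.comp_mem_jacobson hexact g)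
  exact LinearMap.congr_fun hwg x

end MinimalApproximation

theorem nonzero_hom_from_alpha_general (K : Type) [Field K] (A : Type) [Ring A] [Algebra K A]
    (T : Set (ModuleCat A))
    (hT : IsTorsionClass K A T)
    (T₀ T₁ : ModuleCat A) (φ : ModuleCat.of A A ⟶ T₀) (ψ : T₀ ⟶ T₁)
    (hφ : IsMinimalLeftApprox T φ) (hψ : Function.Surjective ψ)
    (hexact : Function.Exact φ ψ)
    (X : ModuleCat A) (hX : X ∈ T) (hX0 : Nontrivial X) :
    (∃ (W : ModuleCat A) (_ : W ∈ alpha T) (f : W ⟶ X), f ≠ 0) ∧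
    ∃ f : ModuleCat.of A
        (↥T₀ ⧸ (⨆ g : T₁ ⟶ T₀, LinearMap.range g.hom)) ⟶ X, f ≠ 0 := by
  obtain ⟨w, hw0, hw⟩ := exists_ne_zero_trace_le_ker hT hφ hψ hexact hX
  let f : ModuleCat.of A (T₀ ⧸ trace T₁ T₀) ⟶ X :=
    ModuleCat.ofHom ((trace T₁ T₀).liftQ w.hom hw)
  have hf : f ≠ 0 := fun h => hw0 <| by
    ext x
    exact congr($h (Submodule.Quotient.mk x))
  have hB : ModuleCat.of A (T₀ ⧸ trace T₁ T₀) ∈ alpha T :=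
    mem_alpha_of_forall_hom_eq_zero hT hφ hψ hexact
      (hT.2.2.1 (ModuleCat.ofHom (trace T₁ T₀).mkQ) (Submodule.mkQ_surjective _) hφ.1.1)
      (hom_quotient_trace_eq_zero hT hφ hψ hexact)
  exact ⟨⟨_, hB, f, hf⟩, f, hf⟩

theorem nonzero_hom_from_alpha (K : Type) [Field K] [IsAlgClosed K] (A : Type) [Ring A] [Algebra K A]
    [FiniteDimensional K A]
    (T : Set (ModuleCat A))
    (hT : IsTorsionClass K A T) (hff : FunctFinite K A T)
    (T₀ T₁ : ModuleCat A) (φ : ModuleCat.of A A ⟶ T₀) (ψ : T₀ ⟶ T₁)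
    (hφ : IsMinimalLeftApprox T φ) (hψ : Function.Surjective ψ)
    (hexact : Function.Exact φ ψ)
    (X : ModuleCat A) (hX : X ∈ T) (hX0 : Nontrivial X) :
    (∃ (W : ModuleCat A) (_ : W ∈ alpha T) (f : W ⟶ X), f ≠ 0) ∧
    ∃ f : ModuleCat.of A
        (↥T₀ ⧸ (⨆ g : T₁ ⟶ T₀, LinearMap.range g.hom)) ⟶ X, f ≠ 0 :=
  nonzero_hom_from_alpha_general K A T hT T₀ T₁ φ ψ hφ hψ hexact X hX hX0
end
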